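/- Let p be an odd prime, m a positive integer with gcd(m−1,p−1)=1, SQ the nonzero squares in F_p, S(i,j)=∑_{c∈F_p^*} η(c)ξ_p^{c^{1−m}j−ci}, and g the quadratic Gauss sum. Then ∑_{i∈SQ} S(i,j) = ((p−1)/2)·η(−1)·g if j=0, and ∑_{i∈SQ} S(i,j) = ((−η(−1)−η(j))/2)·g if j≠0. -/

import Mathlib

/-- `ξ_p^y` for `y : ZMod p`, where `ξ_p = exp(2πi/p)`. -/
noncomputable def xi (p : ℕ) (y : ZMod p) : ℂ :=
  Complex.exp (2 * Real.pi * Complex.I * y.val / p)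

/-- The quadratic Gauss sum `g = ∑_{y ∈ F_p^*} η(y) ξ_p^y`. -/
noncomputable def gaussSum' (p : ℕ) [Fact p.Prime] : ℂ :=
  ∑ y ∈ Finset.univ.filter (fun y : ZMod p => y ≠ 0),
    (quadraticChar (ZMod p) y : ℂ) * xi p y

/-- `S^{(m)}(i,j) = ∑_{c ∈ F_p^*} η(c) ξ_p^{c^{1-m} j - c i}`. -/
noncomputable def Sm (p : ℕ) [Fact p.Prime] (m : ℕ) (i j : ZMod p) : ℂ :=
  ∑ c ∈ Finset.univ.filter (fun c : ZMod p => c ≠ 0),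
    (quadraticChar (ZMod p) c : ℂ) * xi p (c ^ ((1 : ℤ) - m) * j - c * i)

/-!
Write `σ c = c^{1-m} = (c^{m-1})⁻¹`. Since `m - 1` is prime to the even number `p - 1`, it is odd,
so `σ` permutes `F_p^*` and preserves `η`. From `2·1_{SQ} = 1 + η - δ₀` one gets
`2 ∑_{i ∈ SQ} ξ^{-ci} = η(-c) g - 1` for `c ≠ 0`; exchanging the two sums therefore gives
`2 ∑_{i ∈ SQ} S(i,j) = η(-1) g ∑_{c ≠ 0} ξ^{σ(c) j} - ∑_c η(c) ξ^{σ(c) j}`, and reindexing by `σ`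
turns these into the complete sums `∑_{c ≠ 0} ξ^{cj} ∈ {p - 1, -1}` and `∑_c η(c) ξ^{cj} = η(j) g`.
-/

open Finset

theorem MulChar.IsQuadratic.apply_inv_pow {G₀ R : Type*} [CommGroupWithZero G₀] [CommRing R]
    {χ : MulChar G₀ R} (hχ : χ.IsQuadratic) {k : ℕ} (hk : Odd k) (c : G₀) :
    χ (c ^ k)⁻¹ = χ c := by
  rw [← MulChar.inv_apply', hχ.inv, map_pow, ← χ.pow_apply' (Nat.ne_of_odd_add hk), hχ.pow_odd hk]

theorem MulChar.IsQuadratic.mul_self_apply {G₀ R : Type*} [CommGroupWithZero G₀] [CommRing R]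
    {χ : MulChar G₀ R} (hχ : χ.IsQuadratic) {a : G₀} (ha : a ≠ 0) : χ a * χ a = 1 := by
  rw [← sq, ← χ.pow_apply' two_ne_zero, hχ.sq_eq_one, MulChar.one_apply ha.isUnit]

section FiniteField

variable {F : Type*} [Field F] [Fintype F]

theorem FiniteField.pow_bijective {k : ℕ} (hk : k ≠ 0) (hcop : (Fintype.card F - 1).Coprime k) :
    Function.Bijective fun c : F => c ^ k := by
  classical
  refine Finite.injective_iff_bijective.mp fun a b hpow => ?_
  by_cases ha : a = 0
  · subst ha
    rw [zero_pow hk, eq_comm, pow_eq_zero_iff hk] at hpow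
    exact hpow.symm
  have hb : b ≠ 0 := fun hb => ha <| by rwa [hb, zero_pow hk, pow_eq_zero_iff hk] at hpow
  have hunits : Function.Injective fun u : Fˣ => u ^ k := by
    rw [← Fintype.card_units, ← Nat.card_eq_fintype_card] at hcop
    exact hcop.pow_left_bijective.injective
  simpa using congrArg Units.val (hunits (a₁ := .mk0 a ha) (a₂ := .mk0 b hb) (Units.ext hpow))

theorem MulChar.IsQuadratic.sum_mul_addChar_mul {χ : MulChar F ℂ} (hχ : χ.IsQuadratic)
    (hχ₁ : χ ≠ 1) (ψ : AddChar F ℂ) (a : F) :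
    ∑ x, χ x * ψ (x * a) = χ a * gaussSum χ ψ := by
  rcases eq_or_ne a 0 with rfl | ha
  · simp [MulChar.sum_eq_zero_of_ne_one hχ₁]
  have hshift := gaussSum_mulShift χ ψ (.mk0 a ha)
  simp only [Units.val_mk0, gaussSum, AddChar.mulShift_apply] at hshift
  simp only [gaussSum, ← hshift, ← mul_assoc, hχ.mul_self_apply ha, one_mul, mul_comm a]

variable [DecidableEq F]

variable (F) in
noncomputable def complexQuadraticChar : MulChar F ℂ :=
  (quadraticChar F).ringHomComp (Int.castRingHom ℂ)

@[simp]
theorem complexQuadraticChar_apply (a : F) :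
    complexQuadraticChar F a = (quadraticChar F a : ℂ) := rfl

theorem complexQuadraticChar_isQuadratic : (complexQuadraticChar F).IsQuadratic :=
  (quadraticChar_isQuadratic F).comp _

theorem complexQuadraticChar_ne_one (hF : ringChar F ≠ 2) : complexQuadraticChar F ≠ 1 :=
  (MulChar.ringHomComp_ne_one_iff Int.cast_injective).mpr (quadraticChar_ne_one hF)

local notation "η" => complexQuadraticChar F

theorem two_mul_sum_squares_addChar_mul (hF : ringChar F ≠ 2) (ψ : AddChar F ℂ)
    (hψ : ψ.IsPrimitive) {a : F} (ha : a ≠ 0) :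
    2 * ∑ i ∈ univ.filter (fun i : F => quadraticChar F i = 1), ψ (i * a)
      = η a * gaussSum η ψ - 1 := by
  have hind : ∀ i : F, 2 * (if quadraticChar F i = 1 then ψ (i * a) else 0)
      = ψ (i * a) + η i * ψ (i * a) - if i = 0 then 1 else 0 := by
    intro i
    rcases eq_or_ne i 0 with rfl | hi
    · simp
    rcases quadraticChar_dichotomy hi with h | h
    · simp [h, hi]
      ring
    · simp [h, hi]
  rw [sum_filter, mul_sum, sum_congr rfl fun i _ => hind i, sum_sub_distrib, sum_add_distrib,
    AddChar.sum_mulShift a hψ, complexQuadraticChar_isQuadratic.sum_mul_addChar_mul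
      (complexQuadraticChar_ne_one hF) ψ a, sum_ite_eq']
  simp [ha]

theorem two_mul_sum_squares_sum_mul_addChar (hF : ringChar F ≠ 2) (ψ : AddChar F ℂ)
    (hψ : ψ.IsPrimitive) (f : F → ℂ) :
    2 * ∑ i ∈ univ.filter (fun i : F => quadraticChar F i = 1),
        ∑ c ∈ univ.filter (fun c : F => c ≠ 0), η c * f c * ψ (-(c * i))
      = η (-1) * gaussSum η ψ * (∑ c, f c - f 0) - ∑ c, η c * f c := by
  calc _ = ∑ c ∈ univ.filter (fun c : F => c ≠ 0),
        η c * f c * (2 * ∑ i ∈ univ.filter (fun i : F => quadraticChar F i = 1), ψ (i * -c)) := by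
        rw [sum_comm, mul_sum]
        refine sum_congr rfl fun c _ => ?_
        rw [mul_sum, mul_sum, mul_sum]
        refine sum_congr rfl fun i _ => ?_
        rw [mul_neg, mul_comm i]
        ring
    _ = ∑ c ∈ univ.filter (fun c : F => c ≠ 0), (η (-1) * gaussSum η ψ * f c - η c * f c) := by
        refine sum_congr rfl fun c hc => ?_
        have hc : c ≠ 0 := (mem_filter.mp hc).2
        rw [two_mul_sum_squares_addChar_mul hF ψ hψ (neg_ne_zero.mpr hc), neg_eq_neg_one_mul c,
          map_mul]
        linear_combination (η (-1) * gaussSum η ψ * f c) *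
          complexQuadraticChar_isQuadratic.mul_self_apply hc
    _ = _ := by
        rw [sum_sub_distrib, ← mul_sum, filter_ne', sum_erase_eq_sub (mem_univ 0),
          sum_erase_eq_sub (mem_univ 0), MulChar.map_zero, zero_mul, sub_zero]

end FiniteField

section ZMod

variable {p : ℕ} [Fact p.Prime]

theorem xi_eq_stdAddChar (y : ZMod p) : xi p y = ZMod.stdAddChar y := by
  rw [ZMod.stdAddChar_apply, ZMod.toCircle_apply, xi]

theorem gaussSum'_eq_gaussSum :
    gaussSum' p = gaussSum (complexQuadraticChar (ZMod p)) ZMod.stdAddChar := by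
  rw [gaussSum, ← sum_filter_of_ne (p := fun y : ZMod p => y ≠ 0)]
  · simp only [gaussSum', complexQuadraticChar_apply, xi_eq_stdAddChar]
  · rintro y - hy rfl
    simp at hy

theorem Sm_eq_sum {m : ℕ} (hm : 1 ≤ m) (i j : ZMod p) :
    Sm p m i j = ∑ c ∈ univ.filter (fun c : ZMod p => c ≠ 0),
      complexQuadraticChar (ZMod p) c * ZMod.stdAddChar ((c ^ (m - 1))⁻¹ * j)
        * ZMod.stdAddChar (-(c * i)) := by
  have hexp : (1 : ℤ) - m = -((m - 1 : ℕ) : ℤ) := by omega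
  refine sum_congr rfl fun c _ => ?_
  rw [xi_eq_stdAddChar, hexp, zpow_neg, zpow_natCast, sub_eq_add_neg, AddChar.map_add_eq_mul,
    complexQuadraticChar_apply, mul_assoc]

end ZMod

theorem sum_Sm_over_squares_general (p : ℕ) [Fact p.Prime] (hp : p ≠ 2)
    (m : ℕ) (hgcd : Nat.gcd (m - 1) (p - 1) = 1) (j : ZMod p) :
    ∑ i ∈ Finset.univ.filter (fun i : ZMod p => quadraticChar (ZMod p) i = 1),
        Sm p m i j
      = if j = 0 then
          (((p : ℂ) - 1) / 2) * (quadraticChar (ZMod p) (-1) : ℂ) * gaussSum' p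
        else
          ((-(quadraticChar (ZMod p) (-1) : ℂ) - (quadraticChar (ZMod p) j : ℂ)) / 2)
            * gaussSum' p := by
  have hF : ringChar (ZMod p) ≠ 2 := by rwa [ZMod.ringChar_zmod_n]
  have hodd : Odd (m - 1) :=
    (Nat.Coprime.coprime_dvd_right ((Fact.out : p.Prime).even_sub_one hp).two_dvd hgcd).odd_of_right
  have hm : 1 ≤ m := by have := hodd.pos; omega
  set ψ : AddChar (ZMod p) ℂ := ZMod.stdAddChar
  set σ := fun c : ZMod p => (c ^ (m - 1))⁻¹
  have hσ : Function.Bijective σ :=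
    inv_involutive.bijective.comp <|
      FiniteField.pow_bijective hodd.pos.ne' (by rw [ZMod.card]; exact Nat.coprime_comm.mp hgcd)
  have hsum : ∑ c, ψ (σ c * j) = ∑ c, ψ (c * j) := Fintype.sum_bijective σ hσ _ _ fun _ => rfl
  have htwisted : ∑ c, complexQuadraticChar (ZMod p) c * ψ (σ c * j)
      = ∑ c, complexQuadraticChar (ZMod p) c * ψ (c * j) :=
    Fintype.sum_bijective σ hσ _ _ fun c => by
      rw [complexQuadraticChar_isQuadratic.apply_inv_pow hodd]
  have hσ0 : ψ (σ 0 * j) = 1 := by simp [σ, zero_pow hodd.pos.ne']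
  have key := two_mul_sum_squares_sum_mul_addChar hF ψ (ZMod.isPrimitive_stdAddChar p)
    fun c => ψ (σ c * j)
  rw [← sum_congr rfl fun i _ => Sm_eq_sum hm i j, hsum, htwisted,
    AddChar.sum_mulShift j (ZMod.isPrimitive_stdAddChar p),
    complexQuadraticChar_isQuadratic.sum_mul_addChar_mul (complexQuadraticChar_ne_one hF),
    ← gaussSum'_eq_gaussSum, hσ0, ZMod.card, complexQuadraticChar_apply,
    complexQuadraticChar_apply] at key
  split_ifs at key ⊢ with hj
  · subst hj
    rw [quadraticChar_zero, Int.cast_zero] at key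
    linear_combination key / 2
  · linear_combination key / 2

theorem sum_Sm_over_squares (p : ℕ) [Fact p.Prime] (hp : p ≠ 2)
    (m : ℕ) (hm : 1 ≤ m) (hgcd : Nat.gcd (m - 1) (p - 1) = 1) (j : ZMod p) :
    ∑ i ∈ Finset.univ.filter (fun i : ZMod p => quadraticChar (ZMod p) i = 1),
        Sm p m i j
      = if j = 0 then
          (((p : ℂ) - 1) / 2) * (quadraticChar (ZMod p) (-1) : ℂ) * gaussSum' p
        else
          ((-(quadraticChar (ZMod p) (-1) : ℂ) - (quadraticChar (ZMod p) j : ℂ)) / 2)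
            * gaussSum' p :=
  sum_Sm_over_squares_general p hp m hgcd j
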